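/- For all integers p ≥ 1 and 0 ≤ k ≤ p, and all θ ∈ [-π, π], the function D_p^k(θ) = (-1)^k (2 - 2cos θ)^{p+1} ∑_{j∈ℤ} 1/(θ + 2jπ)^{2(p+1-k)} (extended by its limit at θ where the formula degenerates) satisfies D_p^k(0) = 0 for k ≥ 1, D_p^0(0) = 1, and D_p^k(π) = (-1)^k 2^{2k+1} (2^{2(p+1-k)} - 1)/π^{2(p+1-k)} · ζ(2(p+1-k)). -/

import Mathlib

open Real Filter

/-- The Riemann zeta function for real `s > 1`, `ζ(s) = ∑_{n ≥ 1} n^{-s}`. -/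
noncomputable def zetaR (s : ℝ) : ℝ := ∑' n : ℕ, 1 / (n + 1 : ℝ) ^ s

/-- The symbol `D_p^k(θ) = (-1)^k (2 - 2cos θ)^{p+1} ∑_{j∈ℤ} (θ + 2jπ)^{-2(p+1-k)}`. -/
noncomputable def Dpk (p k : ℕ) (θ : ℝ) : ℝ :=
  (-1) ^ k * (2 - 2 * Real.cos θ) ^ (p + 1) *
    ∑' j : ℤ, 1 / (θ + 2 * j * π) ^ (2 * (p + 1 - k))
/-!
Write `m = p + 1 - k`. Since `2 - 2 cos θ = θ² sinc (θ/2)²`, the `j = 0` term contributes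
`(2 - 2 cos θ)^k · sinc (θ/2)^(2m)` to `D_p^k(θ)`, which tends to `0^k`; the other terms satisfy
`|θ + 2jπ| ≥ π|j|` on `[-π, π]`, so their sum stays bounded and is killed by `(2 - 2 cos θ)^m`.
At `θ = π` the lattice points become `(2j + 1)π`, and splitting `ζ` into even and odd terms gives
`∑ (2n+1)^(-s) = (1 - 2^(-s)) ζ(s)`.
-/

open Topology

lemma two_sub_two_mul_cos_eq_sq_mul_sinc_sq (θ : ℝ) :
    2 - 2 * cos θ = θ ^ 2 * sinc (θ / 2) ^ 2 := by
  rcases eq_or_ne θ 0 with rfl | hθ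
  · simp
  rw [sinc_of_ne_zero (by positivity), div_pow, sin_sq_eq_half_sub, mul_div_cancel₀ θ two_ne_zero]
  field_simp

lemma pi_mul_abs_le_abs_add_two_mul_int_mul_pi {θ : ℝ} (hθ : |θ| ≤ π) {j : ℤ} (hj : j ≠ 0) :
    π * |(j : ℝ)| ≤ |θ + 2 * j * π| := by
  have hj1 : (1 : ℝ) ≤ |(j : ℝ)| := by exact_mod_cast Int.one_le_abs hj
  have h2 : |2 * (j : ℝ) * π| = 2 * π * |(j : ℝ)| := by
    rw [abs_mul, abs_mul, abs_two, abs_of_pos pi_pos]; ring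
  calc π * |(j : ℝ)| ≤ |2 * (j : ℝ) * π| - |θ| := by nlinarith [pi_pos]
    _ ≤ |θ + 2 * j * π| := by
      simpa [add_comm] using abs_sub_abs_le_abs_sub (2 * (j : ℝ) * π) (-θ)

lemma norm_one_div_add_two_mul_int_mul_pi_pow_le (m : ℕ) {θ : ℝ} (hθ : |θ| ≤ π) {j : ℤ}
    (hj : j ≠ 0) : ‖1 / (θ + 2 * j * π) ^ (2 * m)‖ ≤ 1 / π ^ (2 * m) * (1 / (j : ℝ) ^ (2 * m)) := by
  rw [one_div_mul_one_div, ← mul_pow, pow_mul, pow_mul, ← sq_abs (_ * _), ← sq_abs (θ + _),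
    ← pow_mul, ← pow_mul, norm_div, norm_one, norm_pow, Real.norm_eq_abs, abs_abs,
    abs_mul, abs_of_pos pi_pos]
  have := pi_mul_abs_le_abs_add_two_mul_int_mul_pi hθ hj
  gcongr

lemma summable_one_div_add_two_mul_int_mul_pi_pow {m : ℕ} (hm : m ≠ 0) {θ : ℝ} (hθ : |θ| ≤ π) :
    Summable fun j : ℤ ↦ 1 / (θ + 2 * j * π) ^ (2 * m) := by
  refine Summable.of_norm_bounded_eventually
    ((summable_one_div_int_pow (p := 2 * m) |>.mpr (by omega)).mul_left (1 / π ^ (2 * m))) ?_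
  filter_upwards [(Set.finite_singleton (0 : ℤ)).compl_mem_cofinite] with j hj
  exact norm_one_div_add_two_mul_int_mul_pi_pow_le m hθ hj

lemma abs_tsum_one_div_add_two_mul_int_mul_pi_pow_sub_le {m : ℕ} (hm : m ≠ 0) {θ : ℝ}
    (hθ : |θ| ≤ π) :
    |∑' j : ℤ, 1 / (θ + 2 * j * π) ^ (2 * m) - 1 / θ ^ (2 * m)| ≤
      1 / π ^ (2 * m) * ∑' j : ℤ, 1 / (j : ℝ) ^ (2 * m) := by
  rw [(summable_one_div_add_two_mul_int_mul_pi_pow hm hθ).tsum_eq_add_tsum_ite 0, ← tsum_mul_left]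
  simp only [Int.cast_zero, mul_zero, zero_mul, add_zero, add_sub_cancel_left, ← Real.norm_eq_abs]
  refine tsum_of_norm_bounded ((summable_one_div_int_pow (p := 2 * m) |>.mpr (by omega)).mul_left
    (1 / π ^ (2 * m))).hasSum fun j ↦ ?_
  split_ifs with hj
  · simp [hj, hm]
  · exact norm_one_div_add_two_mul_int_mul_pi_pow_le m hθ hj

lemma Dpk_eq_of_ne_zero {p k : ℕ} (hk : k ≤ p) {θ : ℝ} (hθ : θ ≠ 0) :
    Dpk p k θ = (-1) ^ k * (2 - 2 * cos θ) ^ k * (sinc (θ / 2) ^ (2 * (p + 1 - k)) +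
      (2 - 2 * cos θ) ^ (p + 1 - k) *
        (∑' j : ℤ, 1 / (θ + 2 * j * π) ^ (2 * (p + 1 - k)) - 1 / θ ^ (2 * (p + 1 - k)))) := by
  rw [Dpk]
  set m := p + 1 - k
  have hc : (2 - 2 * cos θ) ^ m = θ ^ (2 * m) * sinc (θ / 2) ^ (2 * m) := by
    rw [two_sub_two_mul_cos_eq_sq_mul_sinc_sq, mul_pow, pow_mul, pow_mul]
  have hpow : (2 - 2 * cos θ) ^ (p + 1) = (2 - 2 * cos θ) ^ k * (2 - 2 * cos θ) ^ m := by
    rw [← pow_add]; congr 1; omega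
  rw [hpow, hc]
  generalize ∑' j : ℤ, 1 / (θ + 2 * j * π) ^ (2 * m) = S
  field_simp
  ring

theorem tendsto_Dpk_nhdsNE_zero {p k : ℕ} (hk : k ≤ p) :
    Tendsto (Dpk p k) (𝓝[≠] 0) (𝓝 ((-1) ^ k * 0 ^ k)) := by
  set m := p + 1 - k
  have hm : m ≠ 0 := by omega
  have hc : Tendsto (fun θ : ℝ ↦ 2 - 2 * cos θ) (𝓝[≠] 0) (𝓝 0) :=
    ((by fun_prop : Continuous fun θ : ℝ ↦ 2 - 2 * cos θ).tendsto' 0 0 (by norm_num)).mono_left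
      nhdsWithin_le_nhds
  have hsinc : Tendsto (fun θ : ℝ ↦ sinc (θ / 2)) (𝓝[≠] 0) (𝓝 1) :=
    ((continuous_sinc.comp (continuous_id.div_const 2)).tendsto' 0 1 (by simp)).mono_left
      nhdsWithin_le_nhds
  have hbdd : IsBoundedUnder (· ≤ ·) (𝓝[≠] 0) fun θ : ℝ ↦
      ‖∑' j : ℤ, 1 / (θ + 2 * j * π) ^ (2 * m) - 1 / θ ^ (2 * m)‖ := by
    refine isBoundedUnder_of_eventually_le
      (a := 1 / π ^ (2 * m) * ∑' j : ℤ, 1 / (j : ℝ) ^ (2 * m)) ?_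
    filter_upwards [mem_nhdsWithin_of_mem_nhds (Metric.closedBall_mem_nhds (0 : ℝ) pi_pos)]
      with θ hθ
    rw [Metric.mem_closedBall, Real.dist_0_eq_abs] at hθ
    exact abs_tsum_one_div_add_two_mul_int_mul_pi_pow_sub_le hm hθ
  have hcm : Tendsto (fun θ : ℝ ↦ (2 - 2 * cos θ) ^ m) (𝓝[≠] 0) (𝓝 0) := by
    simpa [zero_pow hm] using hc.pow m
  have hrem := hcm.zero_mul_isBoundedUnder_le hbdd
  have hlim := ((hc.pow k).const_mul ((-1) ^ k)).mul ((hsinc.pow (2 * m)).add hrem)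
  rw [one_pow, add_zero, mul_one] at hlim
  exact hlim.congr' (eventually_nhdsWithin_of_forall fun θ hθ ↦ (Dpk_eq_of_ne_zero hk hθ).symm)

lemma zetaR_natCast {s : ℕ} (hs : 1 < s) : zetaR s = ∑' n : ℕ, 1 / (n : ℝ) ^ s := by
  rw [zetaR, (summable_one_div_nat_pow.mpr hs).tsum_eq_zero_add]
  simp [zero_pow (by omega : s ≠ 0)]

lemma tsum_one_div_two_mul_add_one_pow {s : ℕ} (hs : 1 < s) :
    ∑' n : ℕ, 1 / (2 * (n : ℝ) + 1) ^ s = (1 - 1 / 2 ^ s) * ∑' n : ℕ, 1 / (n : ℝ) ^ s := by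
  have hf : Summable fun n : ℕ ↦ 1 / (n : ℝ) ^ s := summable_one_div_nat_pow.mpr hs
  have hsplit := tsum_even_add_odd (f := fun n : ℕ ↦ 1 / (n : ℝ) ^ s)
    (hf.comp_injective (i := (2 * ·)) fun a b (h : 2 * a = 2 * b) ↦ by omega)
    (hf.comp_injective (i := (2 * · + 1)) fun a b (h : 2 * a + 1 = 2 * b + 1) ↦ by omega)
  have heven : ∑' n : ℕ, 1 / ((2 * n : ℕ) : ℝ) ^ s = 1 / 2 ^ s * ∑' n : ℕ, 1 / (n : ℝ) ^ s := by
    simp only [Nat.cast_mul, Nat.cast_ofNat, mul_pow, ← one_div_mul_one_div, tsum_mul_left]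
  rw [heven] at hsplit
  push_cast at hsplit
  linear_combination hsplit

lemma tsum_int_one_div_two_mul_add_one_pow {m : ℕ} (hm : m ≠ 0) :
    ∑' j : ℤ, 1 / (2 * (j : ℝ) + 1) ^ (2 * m) = 2 * ∑' n : ℕ, 1 / (2 * (n : ℝ) + 1) ^ (2 * m) := by
  have hf : Summable fun n : ℕ ↦ 1 / (n : ℝ) ^ (2 * m) := summable_one_div_nat_pow.mpr (by omega)
  have hodd : Summable fun n : ℕ ↦ 1 / (2 * (n : ℝ) + 1) ^ (2 * m) := by
    have := hf.comp_injective (i := (2 * · + 1)) fun a b (h : 2 * a + 1 = 2 * b + 1) ↦ by omega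
    simpa only [Function.comp_def, Nat.cast_add, Nat.cast_mul, Nat.cast_ofNat, Nat.cast_one]
      using this
  have hneg (n : ℕ) :
      1 / (2 * ((-(n + 1 : ℤ) : ℤ) : ℝ) + 1) ^ (2 * m) = 1 / (2 * (n : ℝ) + 1) ^ (2 * m) := by
    rw [pow_mul, pow_mul, ← neg_sq]; push_cast; ring_nf
  rw [tsum_of_nat_of_neg_add_one (by simpa using hodd) (by simpa only [hneg] using hodd)]
  simp only [hneg, Int.cast_natCast]
  ring

lemma Dpk_pi (p k : ℕ) : Dpk p k π = (-1) ^ k * 4 ^ (p + 1) / π ^ (2 * (p + 1 - k)) *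
    ∑' j : ℤ, 1 / (2 * (j : ℝ) + 1) ^ (2 * (p + 1 - k)) := by
  have hodd (j : ℤ) : π + 2 * j * π = (2 * j + 1) * π := by ring
  simp_rw [Dpk, cos_pi, hodd, mul_pow, ← one_div_mul_one_div, tsum_mul_right]
  ring

theorem Dpk_values_general (p k : ℕ) (hk : k ≤ p) :
    (1 ≤ k → Tendsto (Dpk p k) (nhdsWithin 0 {(0 : ℝ)}ᶜ) (nhds 0)) ∧
    (k = 0 → Tendsto (Dpk p k) (nhdsWithin 0 {(0 : ℝ)}ᶜ) (nhds 1)) ∧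
    Dpk p k π =
      (-1) ^ k * 2 ^ (2 * k + 1) * (2 ^ (2 * (p + 1 - k)) - 1) / π ^ (2 * (p + 1 - k)) *
        zetaR (2 * (p + 1 - k)) := by
  refine ⟨fun hk1 ↦ ?_, fun hk0 ↦ ?_, ?_⟩
  · simpa [zero_pow (by omega : k ≠ 0)] using tendsto_Dpk_nhdsNE_zero hk
  · simpa [hk0] using tendsto_Dpk_nhdsNE_zero hk
  have hm : p + 1 - k ≠ 0 := by omega
  have hzeta_arg : 2 * ((p : ℝ) + 1 - k) = ((2 * (p + 1 - k) : ℕ) : ℝ) := by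
    push_cast [Nat.cast_sub (by omega : k ≤ p + 1)]; ring
  have hfour : (4 : ℝ) ^ (p + 1) = 2 ^ (2 * (p + 1 - k)) * 2 ^ (2 * k) := by
    rw [← pow_add, show (4 : ℝ) = 2 ^ 2 by norm_num, ← pow_mul]; congr 1; omega
  rw [Dpk_pi, tsum_int_one_div_two_mul_add_one_pow hm, tsum_one_div_two_mul_add_one_pow (by omega),
    hzeta_arg, zetaR_natCast (by omega), hfour]
  field_simp
  ring

/-- For `1 ≤ p` and `k ≤ p`: the function `D_p^k` (extended by its limit at `0`) satisfies
`D_p^k(0) = 0` for `k ≥ 1`, `D_p^0(0) = 1`, and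
`D_p^k(π) = (-1)^k 2^{2k+1} (2^{2(p+1-k)} - 1)/π^{2(p+1-k)} · ζ(2(p+1-k))`. -/
theorem Dpk_values (p k : ℕ) (hp : 1 ≤ p) (hk : k ≤ p) :
    (1 ≤ k → Tendsto (Dpk p k) (nhdsWithin 0 {(0 : ℝ)}ᶜ) (nhds 0)) ∧
    (k = 0 → Tendsto (Dpk p k) (nhdsWithin 0 {(0 : ℝ)}ᶜ) (nhds 1)) ∧
    Dpk p k π =
      (-1) ^ k * 2 ^ (2 * k + 1) * (2 ^ (2 * (p + 1 - k)) - 1) / π ^ (2 * (p + 1 - k)) *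
        zetaR (2 * (p + 1 - k)) :=
  Dpk_values_general p k hk
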